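/- Let f : A → B be a function between finite sets and for each i let kᵢ be the number of b ∈ B with |f⁻¹(b)| = i. Then the group of automorphisms of f in the arrow category of finite sets (pairs of bijections (α,β) with f∘α = β∘f) is isomorphic to the product over i of the wreath products Σᵢ ≀ Σ_{kᵢ}. -/

import Mathlib

open Equiv

/-- The automorphism group of `f : A → B` in the arrow category of sets: pairs of
bijections `(α, β)` with `f ∘ α = β ∘ f`, as a subgroup of `Perm A × Perm B`. -/
def arrowAut {A B : Type*} (f : A → B) : Subgroup (Perm A × Perm B) where
  carrier := {p | ∀ a, f (p.1 a) = p.2 (f a)}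
  one_mem' := fun _ => rfl
  mul_mem' := by
    intro p q hp hq a
    simp only [Prod.fst_mul, Prod.snd_mul, Perm.mul_apply]
    rw [hp, hq]
  inv_mem' := by
    intro p hp a
    simp only [Prod.fst_inv, Prod.snd_inv, Set.mem_setOf_eq] at *
    have := hp (p.1⁻¹ a)
    rw [← Perm.mul_apply, mul_inv_cancel, Perm.one_apply] at this
    rw [this, ← Perm.mul_apply, inv_mul_cancel, Perm.one_apply]

/-- The homomorphism `Perm (Fin k) →* MulAut ((Fin k) → G)` permuting coordinates. -/
def permCoord (G : Type*) [Group G] (k : ℕ) : Perm (Fin k) →* MulAut (Fin k → G) where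
  toFun σ := MulEquiv.arrowCongr σ (MulEquiv.refl G)
  map_one' := by ext v i; rfl
  map_mul' := fun σ τ => by ext v i; rfl

/-- The wreath product `Σᵢ ≀ Σₖ = (Σᵢ)ᵏ ⋊ Σₖ`. -/
abbrev Wreath (i k : ℕ) : Type :=
  (Fin k → Perm (Fin i)) ⋊[permCoord (Perm (Fin i)) k] Perm (Fin k)

/-!
An automorphism `(α, β)` of `f` maps the fibre over `b` bijectively onto the fibre over `β b`,
so `β` preserves fibre sizes. Choosing bijections, `f` is isomorphic to the disjoint union over
`i` of the projections `Fin kᵢ × Fin i → Fin kᵢ`, and since fibre sizes tell the summands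
apart, automorphisms cannot mix them and the automorphism group splits as a product. An
automorphism of a projection `Fin k × X → Fin k` is a shear `(j, x) ↦ (σ j, τ (σ j) x)`, and
composing shears is exactly the multiplication of `(Fin k → Perm X) ⋊ Perm (Fin k)`.
-/

section ArrowAut

variable {A A' B B' : Type*}

def arrowAutCongr {f : A → B} {f' : A' → B'} (eA : A ≃ A') (eB : B ≃ B')
    (h : ∀ a, f' (eA a) = eB (f a)) : arrowAut f ≃* arrowAut f' :=
  ((eA.permCongrHom.prodCongr eB.permCongrHom).subgroupMap (arrowAut f)).trans <|
    MulEquiv.subgroupCongr <| by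
      ext p
      rw [Subgroup.map_equiv_eq_comap_symm, Subgroup.mem_comap]
      change (∀ a, f (eA.symm (p.1 (eA a))) = eB.symm (p.2 (eB (f a)))) ↔
        ∀ a', f' (p.1 a') = p.2 (f' a')
      rw [← eA.forall_congr_right]
      refine forall_congr' fun a => ?_
      rw [h, ← eA.apply_symm_apply (p.1 (eA a)), h, eA.apply_symm_apply, ← eB.apply_eq_iff_eq,
        eB.apply_symm_apply]

theorem card_fiber_arrowAut_apply [Fintype A] [DecidableEq B] {f : A → B}
    {p : Perm A × Perm B} (hp : p ∈ arrowAut f) (b : B) :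
    Fintype.card {a // f a = p.2 b} = Fintype.card {a // f a = b} :=
  Fintype.card_congr <| (p.1.subtypeEquiv fun a => by rw [hp, p.2.apply_eq_iff_eq]).symm

end ArrowAut

theorem Equiv.Perm.mem_range_sigmaCongrRightHom {ι : Type*} {X : ι → Type*} {σ : Perm (Σ i, X i)}
    (hσ : ∀ x, (σ x).1 = x.1) : σ ∈ (Perm.sigmaCongrRightHom X).range := by
  refine ⟨fun i => (sigmaSubtype i).permCongr (σ.subtypePerm fun x => by rw [hσ]), ?_⟩
  ext1 ⟨i, x⟩
  exact congrArg Subtype.val ((sigmaSubtype i).symm_apply_apply ⟨σ ⟨i, x⟩, hσ _⟩)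

section SigmaMap

variable {ι : Type*} {X Y : ι → Type*} (f : ∀ i, X i → Y i)

def arrowAutPiHom : (∀ i, arrowAut (f i)) →* arrowAut (Sigma.map id f) where
  toFun p := ⟨(Perm.sigmaCongrRightHom X fun i => (p i).1.1,
      Perm.sigmaCongrRightHom Y fun i => (p i).1.2),
    fun ⟨i, x⟩ => congrArg (Sigma.mk i) ((p i).2 x)⟩
  map_one' := rfl
  map_mul' _ _ := rfl

theorem arrowAutPiHom_injective : Function.Injective (arrowAutPiHom f) := by
  intro p q hpq
  have h1 := Perm.sigmaCongrRightHom_injective (congrArg (·.1.1) hpq)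
  have h2 := Perm.sigmaCongrRightHom_injective (congrArg (·.1.2) hpq)
  exact funext fun i => Subtype.ext (Prod.ext (congrFun h1 i) (congrFun h2 i))

theorem arrowAutPiHom_surjective
    (hf : ∀ p ∈ arrowAut (Sigma.map id f), ∀ y, (p.2 y).1 = y.1) :
    Function.Surjective (arrowAutPiHom f) := by
  rintro ⟨⟨σ, τ⟩, hp⟩
  have hτ : ∀ y, (τ y).1 = y.1 := hf _ hp
  have hσ : ∀ x, (σ x).1 = x.1 := fun x => (congrArg Sigma.fst (hp x)).trans (hτ _)
  obtain ⟨α, rfl⟩ := Perm.mem_range_sigmaCongrRightHom hσ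
  obtain ⟨β, rfl⟩ := Perm.mem_range_sigmaCongrRightHom hτ
  exact ⟨fun i => ⟨(α i, β i), fun x => sigma_mk_injective (hp ⟨i, x⟩)⟩, rfl⟩

noncomputable def arrowAutSigmaMapEquiv
    (hf : ∀ p ∈ arrowAut (Sigma.map id f), ∀ y, (p.2 y).1 = y.1) :
    arrowAut (Sigma.map id f) ≃* ∀ i, arrowAut (f i) :=
  (MulEquiv.ofBijective _ ⟨arrowAutPiHom_injective f, arrowAutPiHom_surjective f hf⟩).symm

end SigmaMap

section Wreath

variable {k : ℕ} {X : Type*} {p : Perm (Fin k × X) × Perm (Fin k)}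

theorem arrowAut_fst_apply (hp : p ∈ arrowAut (Prod.fst : Fin k × X → Fin k))
    (j : Fin k) (x : X) :
    p.1 (j, x) = (p.2 j, (p.1 (j, x)).2) :=
  Prod.ext (hp (j, x)) rfl

def fiberPerm (hp : p ∈ arrowAut (Prod.fst : Fin k × X → Fin k)) (j : Fin k) : Perm X where
  toFun x := (p.1 (j, x)).2
  invFun y := (p.1⁻¹ (p.2 j, y)).2
  left_inv x := by
    dsimp only
    rw [← arrowAut_fst_apply hp, Perm.coe_inv, symm_apply_apply]
  right_inv y := by
    have h : (p.1⁻¹ (p.2 j, y)).1 = j :=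
      ((arrowAut _).inv_mem hp (p.2 j, y)).trans (p.2.symm_apply_apply j)
    dsimp only
    rw [show (j, (p.1⁻¹ (p.2 j, y)).2) = p.1⁻¹ (p.2 j, y) from Prod.ext h.symm rfl,
      Perm.coe_inv, apply_symm_apply]

theorem fiberPerm_apply (hp : p ∈ arrowAut (Prod.fst : Fin k × X → Fin k)) (j : Fin k) (x : X) :
    fiberPerm hp j x = (p.1 (j, x)).2 :=
  rfl

def semidirectProductEquivArrowAutFst :
    (Fin k → Perm X) ⋊[permCoord (Perm X) k] Perm (Fin k) ≃*
      arrowAut (Prod.fst : Fin k × X → Fin k) where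
  toFun w := ⟨(prodShear w.right fun j => w.left (w.right j), w.right), fun _ => rfl⟩
  invFun q := ⟨fun j => fiberPerm q.2 (q.1.2⁻¹ j), q.1.2⟩
  left_inv w := by
    refine SemidirectProduct.ext (funext fun j => Equiv.ext fun x => ?_) rfl
    simp [fiberPerm_apply, prodShear]
  right_inv q := by
    refine Subtype.ext (Prod.ext (Equiv.ext fun ⟨j, x⟩ => ?_) rfl)
    simp [fiberPerm_apply, prodShear, ← arrowAut_fst_apply q.2]
  map_mul' w₁ w₂ := by
    refine Subtype.ext (Prod.ext (Equiv.ext fun ⟨j, x⟩ => ?_) rfl)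
    rw [SemidirectProduct.mul_left, SemidirectProduct.mul_right]
    simp [prodShear, permCoord, MulEquiv.arrowCongr]

end Wreath

section FiberModel

variable {n : ℕ} {k : ℕ → ℕ}

variable (n k) in
def fiberModel : (Σ i : Fin (n + 1), Fin (k i) × Fin i) → Σ i : Fin (n + 1), Fin (k i) :=
  Sigma.map id fun _ => Prod.fst

theorem card_fiber_fiberModel (b : Σ i : Fin (n + 1), Fin (k i)) :
    Fintype.card {a // fiberModel n k a = b} = b.1 := by
  obtain ⟨i, j⟩ := b
  refine .trans (Fintype.card_congr (Equiv.ofBijective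
    (fun x : Fin i => (⟨⟨i, j, x⟩, rfl⟩ : {a // fiberModel n k a = ⟨i, j⟩}))
    ⟨fun x y hxy => ?_, ?_⟩)).symm (Fintype.card_fin i)
  · simpa [Subtype.ext_iff] using hxy
  · rintro ⟨⟨i', j', x⟩, h⟩
    obtain ⟨rfl, h⟩ := Sigma.mk.inj_iff.mp h
    obtain rfl := eq_of_heq h
    exact ⟨x, rfl⟩

theorem arrowAut_fiberModel_fst_snd_apply {p} (hp : p ∈ arrowAut (fiberModel n k))
    (b : Σ i : Fin (n + 1), Fin (k i)) : (p.2 b).1 = b.1 :=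
  Fin.ext <| by rw [← card_fiber_fiberModel, ← card_fiber_fiberModel, card_fiber_arrowAut_apply hp]

end FiberModel

theorem exists_equiv_fiberModel {A B : Type*} [Fintype A] [Fintype B] [DecidableEq B]
    (f : A → B) (k : ℕ → ℕ)
    (hk : ∀ i, k i = Fintype.card {b : B // Fintype.card {a : A // f a = b} = i}) :
    ∃ (eA : A ≃ Σ i : Fin (Fintype.card A + 1), Fin (k i) × Fin i)
      (eB : B ≃ Σ i : Fin (Fintype.card A + 1), Fin (k i)),
      ∀ a, fiberModel _ k (eA a) = eB (f a) := by
  let c (b : B) : Fin (Fintype.card A + 1) :=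
    ⟨Fintype.card {a // f a = b}, Nat.lt_succ_of_le (Fintype.card_subtype_le _)⟩
  have hc (i : Fin (Fintype.card A + 1)) : Fintype.card {b // c b = i} = k i :=
    (Fintype.card_congr (subtypeEquivRight fun _ => Fin.ext_iff)).trans (hk i).symm
  let eB : B ≃ Σ i : Fin (Fintype.card A + 1), Fin (k i) :=
    (sigmaFiberEquiv c).symm.trans (sigmaCongrRight fun i => Fintype.equivFinOfCardEq (hc i))
  -- `A ≃ Σ b, f⁻¹ b ≃ Σ b, Fin (c b) ≃ Σ (i, j), Fin i ≃ Σ i, Fin kᵢ × Fin i`; every step keeps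
  -- the point `eB (f a)` over which `a` lies, so the square commutes by `rfl`.
  let eA : A ≃ Σ i : Fin (Fintype.card A + 1), Fin (k i) × Fin i :=
    (sigmaFiberEquiv f).symm.trans <|
      (sigmaCongrRight fun _ => Fintype.equivFinOfCardEq rfl).trans <|
      (sigmaCongrLeft eB (β := fun y => Fin y.1)).trans <|
      (sigmaAssoc fun (i : Fin (Fintype.card A + 1)) (_ : Fin (k i)) => Fin i).trans <|
      sigmaCongrRight fun _ => sigmaEquivProd _ _
  exact ⟨eA, eB, fun _ => rfl⟩

/-- The automorphism group of a function `f : A → B` between finite sets in the arrow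
category is isomorphic to the product over `i` of the wreath products `Σᵢ ≀ Σ_{kᵢ}`,
where `kᵢ` is the number of `b ∈ B` with fiber of size `i`. -/
theorem stmt_18 {A B : Type*} [Fintype A] [Fintype B] [DecidableEq B]
    (f : A → B) (k : ℕ → ℕ)
    (hk : ∀ i, k i = Fintype.card {b : B // Fintype.card {a : A // f a = b} = i}) :
    Nonempty (arrowAut f ≃* ∀ i : Fin (Fintype.card A + 1), Wreath i (k i)) := by
  obtain ⟨eA, eB, h⟩ := exists_equiv_fiberModel f k hk
  exact ⟨(arrowAutCongr eA eB h).trans <|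
    (arrowAutSigmaMapEquiv _ fun _ => arrowAut_fiberModel_fst_snd_apply).trans <|
    MulEquiv.piCongrRight fun _ => semidirectProductEquivArrowAutFst.symm⟩
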